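/- For binary classifiers g with values in {−1,+1} and a symmetric hypothesis space H (closed under negation g ↦ −g), the equal opportunity distance in the target domain satisfies Δ_{EOp,T}(g) ≤ Δ_{EOp,S}(g) + (1/2) d_{HΔH}(D_{T_0^{-1}}, D_{S_0^{-1}}) + (1/2) d_{HΔH}(D_{T_1^{-1}}, D_{S_1^{-1}}) + λ_0^{-1} + λ_1^{-1}, where λ_α^{-1} = ε_{S_α^{-1}}(g*, f) + ε_{T_α^{-1}}(g*, f) for any fixed g* ∈ H. -/

import Mathlib

open MeasureTheory

/-- Disagreement error for ±1-valued functions: `ε_D(h,h') = E_{z∼D}[|h z − h' z|/2]`. -/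
noncomputable def errH {Z : Type*} [MeasurableSpace Z] (μ : Measure Z) (h h' : Z → ℝ) : ℝ :=
  ∫ z, |h z - h' z| / 2 ∂μ

/-- `d_{HΔH}(D,D') = 2 sup_{h,h'∈H} |Pr_D[h≠h'] − Pr_{D'}[h≠h']|`. -/
noncomputable def dHH {Z : Type*} [MeasurableSpace Z] (H : Set (Z → ℝ))
    (μ ν : Measure Z) : ℝ :=
  2 * ⨆ p : H × H,
    |(μ {z | p.1.1 z ≠ p.2.1 z}).toReal - (ν {z | p.1.1 z ≠ p.2.1 z}).toReal|

/-- Equal opportunity distance in the ±1 label setting. -/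
noncomputable def eopDiffPM {Z : Type*} [MeasurableSpace Z] (μ0 μ1 : Measure Z)
    (g : Z → ℝ) : ℝ :=
  |(∫ z, (1 + g z) / 2 ∂μ0) - ∫ z, (1 + g z) / 2 ∂μ1|

/-!
Fix the disagreement region `S = {g ≠ gs}`. Because `f = -1` on every domain, the positive rate
`∫ (1 + g)/2` differs from the mass of `S` by at most the error `ε(gs, f)` of the reference
classifier `gs`, and the mass of `S` moves by at most `d_{HΔH}/2` between two domains since `S` is
itself an `HΔH` region. Going from `T_α` to `S_α` through `S` therefore costs
`d_{HΔH}(T_α, S_α)/2 + λ_α`, once for each group.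
-/

lemma abs_half_one_add_sub_ite_ne {a b : ℝ} (ha : a = -1 ∨ a = 1) (hb : b = -1 ∨ b = 1) :
    |(1 + a) / 2 - if a ≠ b then 1 else 0| = |b - -1| / 2 := by
  rcases ha with rfl | rfl <;> rcases hb with rfl | rfl <;> norm_num

section

variable {Z : Type*} [MeasurableSpace Z]

lemma abs_integral_sub_measureReal_ne_le_errH (μ : Measure Z) [IsFiniteMeasure μ]
    {f g gs : Z → ℝ} (hf : f =ᵐ[μ] fun _ => -1)
    (hg : ∀ z, g z = -1 ∨ g z = 1) (hgs : ∀ z, gs z = -1 ∨ gs z = 1)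
    (hg_meas : Measurable g) (hgs_meas : Measurable gs) :
    |(∫ z, (1 + g z) / 2 ∂μ) - μ.real {z | g z ≠ gs z}| ≤ errH μ gs f := by
  set S := {z | g z ≠ gs z}
  have hS : MeasurableSet S := (measurableSet_eq_fun hg_meas hgs_meas).compl
  have hrate : Integrable (fun z => (1 + g z) / 2) μ := by
    refine .of_bound (by fun_prop) 1 (ae_of_all _ fun z => ?_)
    rcases hg z with h | h <;> norm_num [h]
  have hind : Integrable (S.indicator (1 : Z → ℝ)) μ := (integrable_const 1).indicator hS
  rw [← integral_indicator_one hS, ← integral_sub hrate hind]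
  refine abs_integral_le_integral_abs.trans_eq (integral_congr_ae ?_)
  filter_upwards [hf] with z hfz
  rw [hfz, Set.indicator_apply, ← abs_half_one_add_sub_ite_ne (hg z) (hgs z)]
  rfl

lemma abs_measureReal_ne_sub_le_dHH {H : Set (Z → ℝ)} (μ ν : Measure Z)
    [IsFiniteMeasure μ] [IsFiniteMeasure ν] {h h' : Z → ℝ} (hh : h ∈ H) (hh' : h' ∈ H) :
    |μ.real {z | h z ≠ h' z} - ν.real {z | h z ≠ h' z}| ≤ (1 / 2) * dHH H μ ν := by
  have hbdd : BddAbove (Set.range fun p : H × H =>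
      |μ.real {z | p.1.1 z ≠ p.2.1 z} - ν.real {z | p.1.1 z ≠ p.2.1 z}|) := by
    refine ⟨μ.real Set.univ + ν.real Set.univ, ?_⟩
    rintro _ ⟨p, rfl⟩
    refine (abs_sub _ _).trans ?_
    rw [abs_of_nonneg measureReal_nonneg, abs_of_nonneg measureReal_nonneg]
    exact add_le_add (measureReal_mono (Set.subset_univ _)) (measureReal_mono (Set.subset_univ _))
  have := le_ciSup hbdd (⟨⟨h, hh⟩, ⟨h', hh'⟩⟩ : H × H)
  simp only [dHH, ← measureReal_def]
  linarith

lemma abs_integral_sub_integral_le_dHH_add_errH {H : Set (Z → ℝ)}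
    (hbin : ∀ h ∈ H, ∀ z, h z = -1 ∨ h z = 1) (hmeas : ∀ h ∈ H, Measurable h)
    (μ ν : Measure Z) [IsFiniteMeasure μ] [IsFiniteMeasure ν] {f : Z → ℝ}
    (hfμ : f =ᵐ[μ] fun _ => -1) (hfν : f =ᵐ[ν] fun _ => -1)
    {g gs : Z → ℝ} (hg : g ∈ H) (hgs : gs ∈ H) :
    |(∫ z, (1 + g z) / 2 ∂μ) - ∫ z, (1 + g z) / 2 ∂ν| ≤
      (1 / 2) * dHH H μ ν + (errH ν gs f + errH μ gs f) := by
  have hμ := abs_integral_sub_measureReal_ne_le_errH μ hfμ (hbin g hg) (hbin gs hgs)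
    (hmeas g hg) (hmeas gs hgs)
  have hν := abs_integral_sub_measureReal_ne_le_errH ν hfν (hbin g hg) (hbin gs hgs)
    (hmeas g hg) (hmeas gs hgs)
  have hS := abs_measureReal_ne_sub_le_dHH μ ν hg hgs
  rw [abs_sub_comm] at hν
  linarith [abs_sub_le (∫ z, (1 + g z) / 2 ∂μ) (μ.real {z | g z ≠ gs z})
    (∫ z, (1 + g z) / 2 ∂ν),
    abs_sub_le (μ.real {z | g z ≠ gs z}) (ν.real {z | g z ≠ gs z}) (∫ z, (1 + g z) / 2 ∂ν)]

end

theorem stmt7_general {Z : Type*} [MeasurableSpace Z] (H : Set (Z → ℝ))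
    (hbin : ∀ h ∈ H, ∀ z, h z = -1 ∨ h z = 1)
    (hmeas : ∀ h ∈ H, Measurable h)
    (μS0 μS1 μT0 μT1 : Measure Z)
    [IsProbabilityMeasure μS0] [IsProbabilityMeasure μS1]
    [IsProbabilityMeasure μT0] [IsProbabilityMeasure μT1]
    (f : Z → ℝ)
    (hfS0 : f =ᵐ[μS0] fun _ => -1) (hfS1 : f =ᵐ[μS1] fun _ => -1)
    (hfT0 : f =ᵐ[μT0] fun _ => -1) (hfT1 : f =ᵐ[μT1] fun _ => -1)
    (g : Z → ℝ) (hg : g ∈ H) (gs : Z → ℝ) (hgs : gs ∈ H) :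
    eopDiffPM μT0 μT1 g ≤
      eopDiffPM μS0 μS1 g + (1 / 2) * dHH H μT0 μS0 + (1 / 2) * dHH H μT1 μS1
        + (errH μS0 gs f + errH μT0 gs f) + (errH μS1 gs f + errH μT1 gs f) := by
  have h0 := abs_integral_sub_integral_le_dHH_add_errH hbin hmeas μT0 μS0 hfT0 hfS0 hg hgs
  have h1 := abs_integral_sub_integral_le_dHH_add_errH hbin hmeas μT1 μS1 hfT1 hfS1 hg hgs
  set pT0 := ∫ z, (1 + g z) / 2 ∂μT0
  set pT1 := ∫ z, (1 + g z) / 2 ∂μT1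
  set pS0 := ∫ z, (1 + g z) / 2 ∂μS0
  set pS1 := ∫ z, (1 + g z) / 2 ∂μS1
  have hsplit : |pT0 - pT1| ≤ |pS0 - pS1| + |pT0 - pS0| + |pT1 - pS1| := by
    calc |pT0 - pT1| = |(pS0 - pS1) + (pT0 - pS0) - (pT1 - pS1)| := by ring_nf
      _ ≤ _ := (abs_sub _ _).trans (add_le_add_left (abs_add_le _ _) _)
  unfold eopDiffPM
  linarith

theorem stmt7 {Z : Type*} [MeasurableSpace Z] (H : Set (Z → ℝ))
    (hbin : ∀ h ∈ H, ∀ z, h z = -1 ∨ h z = 1)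
    (hmeas : ∀ h ∈ H, Measurable h)
    (hsym : ∀ h ∈ H, (fun z => -h z) ∈ H)
    (μS0 μS1 μT0 μT1 : Measure Z)
    [IsProbabilityMeasure μS0] [IsProbabilityMeasure μS1]
    [IsProbabilityMeasure μT0] [IsProbabilityMeasure μT1]
    (f : Z → ℝ)
    (hfS0 : f =ᵐ[μS0] fun _ => -1) (hfS1 : f =ᵐ[μS1] fun _ => -1)
    (hfT0 : f =ᵐ[μT0] fun _ => -1) (hfT1 : f =ᵐ[μT1] fun _ => -1)
    (g : Z → ℝ) (hg : g ∈ H) (gs : Z → ℝ) (hgs : gs ∈ H) :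
    eopDiffPM μT0 μT1 g ≤
      eopDiffPM μS0 μS1 g + (1 / 2) * dHH H μT0 μS0 + (1 / 2) * dHH H μT1 μS1
        + (errH μS0 gs f + errH μT0 gs f) + (errH μS1 gs f + errH μT1 gs f) :=
  stmt7_general H hbin hmeas μS0 μS1 μT0 μT1 f hfS0 hfS1 hfT0 hfT1 g hg gs hgs
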